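/- Let p be a prime, let n ≥ m ≥ 1, and let F : ℤ_p^n → ℤ_p^m be a function which is 1-Lipschitz with respect to the maximum p-adic metric (i.e., the maximum over coordinates of |F(a)_j − F(b)_j|_p is at most the maximum over coordinates of |a_i − b_i|_p). Then F is measure-preserving from (ℤ_p^n, μ_p^n) to (ℤ_p^m, μ_p^m) (i.e., μ_p^n(F⁻¹(S)) = μ_p^m(S) for every measurable S ⊆ ℤ_p^m) if and only if for every k ≥ 1 the induced map (ℤ/p^kℤ)^n → (ℤ/p^kℤ)^m is balanced, i.e., every point of (ℤ/p^kℤ)^m has exactly p^{k(n−m)} preimages. -/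

import Mathlib

/-!
A 1-Lipschitz map sends the closed ball of radius `p ^ (-k)` around `a` (the level-`k` cylinder,
i.e. the fibre of reduction mod `p ^ k`) into the one around `F a`. Hence reduction mod `p ^ k`
intertwines `F` with the induced map on residues, and the `μ^n`-measure of the `F`-preimage of a
level-`k` cylinder is the number of preimages under the induced map times `p ^ (-k n)`, while the
cylinder itself has `μ^m`-measure `p ^ (-k m)`. So balancedness at level `k` is measure
preservation on level-`k` cylinders. The cylinders form a π-system and a topological basis of the
second countable space `ℤ_[p] ^ m`, so they generate its Borel σ-algebra and determine finite
measures.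
-/

open MeasureTheory Metric TopologicalSpace
open scoped ENNReal

theorem ENNReal.natCast_mul_inv_pow_eq_inv_pow_iff {q N m n : ℕ} (hq : q ≠ 0) (hmn : m ≤ n) :
    (N : ℝ≥0∞) * (q : ℝ≥0∞)⁻¹ ^ n = (q : ℝ≥0∞)⁻¹ ^ m ↔ N = q ^ (n - m) := by
  obtain ⟨d, rfl⟩ := Nat.exists_eq_add_of_le hmn
  have hq0 : (q : ℝ≥0∞)⁻¹ ^ m ≠ 0 := pow_ne_zero _ (ENNReal.inv_ne_zero.2 (natCast_ne_top q))
  have hqt : (q : ℝ≥0∞)⁻¹ ^ m ≠ ⊤ := pow_ne_top (inv_ne_top.2 (by exact_mod_cast hq))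
  have hqd0 : (q : ℝ≥0∞) ^ d ≠ 0 := pow_ne_zero _ (by exact_mod_cast hq)
  have hqdt : (q : ℝ≥0∞) ^ d ≠ ⊤ := pow_ne_top (natCast_ne_top q)
  rw [Nat.add_sub_cancel_left, pow_add, mul_left_comm]
  nth_rw 2 [← mul_one ((q : ℝ≥0∞)⁻¹ ^ m)]
  rw [ENNReal.mul_right_inj hq0 hqt, ← ENNReal.inv_pow, ← div_eq_mul_inv,
    ENNReal.div_eq_one_iff hqd0 hqdt, ← Nat.cast_pow, Nat.cast_inj]

theorem lipschitzWith_one_of_norm_sub_le_iSup {ι κ E : Type*} [Fintype ι] [Fintype κ]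
    [SeminormedAddCommGroup E] {F : (ι → E) → κ → E}
    (hF : ∀ (a b : ι → E) (j : κ), ‖F a j - F b j‖ ≤ ⨆ i, ‖a i - b i‖) : LipschitzWith 1 F :=
  LipschitzWith.of_dist_le_mul fun a b => by
    rw [dist_eq_norm, dist_eq_norm, NNReal.coe_one, one_mul]
    exact (pi_norm_le_iff_of_nonneg (norm_nonneg _)).2 fun j =>
      (hF a b j).trans (Real.iSup_le (norm_le_pi_norm (a - b)) (norm_nonneg _))

namespace PadicInt

variable {p : ℕ} [Fact p.Prime]

theorem toZModPow_eq_iff_norm_sub_le {k : ℕ} {a b : ℤ_[p]} :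
    toZModPow k a = toZModPow k b ↔ ‖a - b‖ ≤ (p : ℝ) ^ (-(k : ℤ)) := by
  rw [norm_le_pow_iff_mem_span_pow, ← ker_toZModPow, RingHom.mem_ker, map_sub, sub_eq_zero]

theorem closedBall_zero_one : closedBall (0 : ℤ_[p]) 1 = Set.univ :=
  Set.eq_univ_of_forall fun x => mem_closedBall_zero_iff.2 (norm_le_one x)

theorem isProbabilityMeasure_of_measure_closedBall [MeasurableSpace ℤ_[p]] {μ : Measure ℤ_[p]}
    (hμ : ∀ (a : ℤ_[p]) (k : ℕ), μ (closedBall a ((p : ℝ) ^ (-(k : ℤ)))) = ((p : ℝ≥0∞) ^ k)⁻¹) :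
    IsProbabilityMeasure μ :=
  ⟨by simpa [closedBall_zero_one] using hμ 0 0⟩

variable {ι κ : Type*}

noncomputable def reduceMod (k : ℕ) (a : ι → ℤ_[p]) : ι → ZMod (p ^ k) :=
  fun i => toZModPow k (a i)

noncomputable def liftMod (k : ℕ) (x : ι → ZMod (p ^ k)) : ι → ℤ_[p] :=
  fun i => ((x i).val : ℤ_[p])

noncomputable def inducedMod (F : (ι → ℤ_[p]) → κ → ℤ_[p]) (k : ℕ)
    (x : ι → ZMod (p ^ k)) : κ → ZMod (p ^ k) :=
  reduceMod k (F (liftMod k x))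

theorem reduceMod_liftMod (k : ℕ) (x : ι → ZMod (p ^ k)) : reduceMod k (liftMod k x) = x :=
  funext fun i => by rw [reduceMod, liftMod, map_natCast, ZMod.natCast_zmod_val]

theorem reduceMod_eq_of_le {k l : ℕ} (hkl : k ≤ l) {a b : ι → ℤ_[p]}
    (h : reduceMod l a = reduceMod l b) : reduceMod k a = reduceMod k b :=
  funext fun i => by
    simpa only [reduceMod, cast_toZModPow k l hkl] using
      congrArg (ZMod.cast : ZMod (p ^ l) → ZMod (p ^ k)) (congrFun h i)

theorem preimage_reduceMod_singleton_subset {k l : ℕ} (hkl : k ≤ l) (a : ι → ℤ_[p]) :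
    reduceMod l ⁻¹' {reduceMod l a} ⊆ reduceMod k ⁻¹' {reduceMod k a} :=
  fun _ hb => reduceMod_eq_of_le hkl hb

/-- Level `0` is left out so that balancedness, which is only assumed for `k ≥ 1`, covers every
cylinder. -/
def modCylinders (ι : Type*) : Set (Set (ι → ℤ_[p])) :=
  {S | ∃ k, 0 < k ∧ ∃ y : ι → ZMod (p ^ k), reduceMod k ⁻¹' {y} = S}

theorem isPiSystem_modCylinders : IsPiSystem (modCylinders (p := p) ι) := by
  rintro _ ⟨k, hk, _, rfl⟩ _ ⟨l, hl, _, rfl⟩ ⟨a, rfl, ha⟩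
  rw [Set.mem_preimage, Set.mem_singleton_iff] at ha
  subst ha
  rcases le_total k l with hkl | hlk
  · rw [Set.inter_eq_right.2 (preimage_reduceMod_singleton_subset hkl a)]
    exact ⟨l, hl, _, rfl⟩
  · rw [Set.inter_eq_left.2 (preimage_reduceMod_singleton_subset hlk a)]
    exact ⟨k, hk, _, rfl⟩

variable [Fintype ι]

theorem reduceMod_eq_iff_norm_sub_le {k : ℕ} {a b : ι → ℤ_[p]} :
    reduceMod k a = reduceMod k b ↔ ‖a - b‖ ≤ (p : ℝ) ^ (-(k : ℤ)) := by
  rw [funext_iff, pi_norm_le_iff_of_nonneg (by positivity)]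
  exact forall_congr' fun i => toZModPow_eq_iff_norm_sub_le

theorem preimage_reduceMod_singleton (k : ℕ) (y : ι → ZMod (p ^ k)) :
    reduceMod k ⁻¹' {y} = closedBall (liftMod k y) ((p : ℝ) ^ (-(k : ℤ))) := by
  ext a
  rw [Set.mem_preimage, Set.mem_singleton_iff, mem_closedBall_iff_norm, ← reduceMod_liftMod k y,
    reduceMod_eq_iff_norm_sub_le, reduceMod_liftMod]

theorem isTopologicalBasis_modCylinders : IsTopologicalBasis (modCylinders (p := p) ι) := by
  refine isTopologicalBasis_of_isOpen_of_nhds ?_ fun a U ha hU => ?_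
  · rintro _ ⟨k, -, y, rfl⟩
    rw [preimage_reduceMod_singleton]
    exact IsUltrametricDist.isOpen_closedBall _
      (zpow_ne_zero _ (by exact_mod_cast (Fact.out : p.Prime).ne_zero))
  · obtain ⟨ε, hε, hball⟩ := Metric.isOpen_iff.1 hU a ha
    obtain ⟨k, hk⟩ := exists_pow_neg_lt p hε
    refine ⟨_, ⟨k + 1, k.succ_pos, _, rfl⟩, rfl, fun b hb => hball ?_⟩
    rw [mem_ball, dist_eq_norm]
    exact (reduceMod_eq_iff_norm_sub_le.1 (reduceMod_eq_of_le k.le_succ hb)).trans_lt hk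

theorem reduceMod_apply_of_lipschitzWith [Fintype κ] {F : (ι → ℤ_[p]) → κ → ℤ_[p]}
    (hF : LipschitzWith 1 F) (k : ℕ) (a : ι → ℤ_[p]) :
    reduceMod k (F a) = inducedMod F k (reduceMod k a) := by
  refine reduceMod_eq_iff_norm_sub_le.2 ((hF.norm_sub_le _ _).trans ?_)
  rw [NNReal.coe_one, one_mul, ← reduceMod_eq_iff_norm_sub_le, reduceMod_liftMod]

theorem preimage_preimage_reduceMod_of_lipschitzWith [Fintype κ] {F : (ι → ℤ_[p]) → κ → ℤ_[p]}
    (hF : LipschitzWith 1 F) (k : ℕ) (A : Set (κ → ZMod (p ^ k))) :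
    F ⁻¹' (reduceMod k ⁻¹' A) = reduceMod k ⁻¹' (inducedMod F k ⁻¹' A) := by
  ext a
  simp only [Set.mem_preimage, reduceMod_apply_of_lipschitzWith hF]

variable [MeasurableSpace ℤ_[p]] [BorelSpace ℤ_[p]]

theorem measurableSpace_eq_generateFrom_modCylinders :
    (inferInstance : MeasurableSpace (ι → ℤ_[p])) =
      MeasurableSpace.generateFrom (modCylinders ι) :=
  BorelSpace.measurable_eq.trans isTopologicalBasis_modCylinders.borel_eq_generateFrom

theorem measurableSet_preimage_reduceMod_singleton (k : ℕ) (y : ι → ZMod (p ^ k)) :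
    MeasurableSet (reduceMod k ⁻¹' {y}) := by
  rw [preimage_reduceMod_singleton]
  exact measurableSet_closedBall

theorem ext_of_modCylinders {ν₁ ν₂ : Measure (ι → ℤ_[p])} [IsFiniteMeasure ν₁]
    (huniv : ν₁ Set.univ = ν₂ Set.univ)
    (h : ∀ k, 0 < k → ∀ y : ι → ZMod (p ^ k), ν₁ (reduceMod k ⁻¹' {y}) = ν₂ (reduceMod k ⁻¹' {y})) :
    ν₁ = ν₂ :=
  ext_of_generate_finite _ measurableSpace_eq_generateFrom_modCylinders isPiSystem_modCylinders
    (by rintro _ ⟨k, hk, y, rfl⟩; exact h k hk y) huniv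

section HaarBalls

variable {μ : Measure ℤ_[p]}
    (hμ : ∀ (a : ℤ_[p]) (k : ℕ), μ (closedBall a ((p : ℝ) ^ (-(k : ℤ)))) = ((p : ℝ≥0∞) ^ k)⁻¹)
include hμ

theorem measure_pi_preimage_reduceMod_singleton (k : ℕ) (y : ι → ZMod (p ^ k)) :
    Measure.pi (fun _ : ι => μ) (reduceMod k ⁻¹' {y}) = ((p : ℝ≥0∞) ^ k)⁻¹ ^ Fintype.card ι := by
  have := isProbabilityMeasure_of_measure_closedBall hμ
  rw [preimage_reduceMod_singleton, Measure.pi_closedBall _ _ (by positivity)]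
  simp only [hμ, Finset.prod_const, Finset.card_univ]

theorem measure_pi_preimage_reduceMod (k : ℕ) (A : Set (ι → ZMod (p ^ k))) :
    Measure.pi (fun _ : ι => μ) (reduceMod k ⁻¹' A) =
      Nat.card A * ((p : ℝ≥0∞) ^ k)⁻¹ ^ Fintype.card ι := by
  rw [← tsum_measure_preimage_singleton A.to_countable
    fun y _ => measurableSet_preimage_reduceMod_singleton k y]
  simp only [measure_pi_preimage_reduceMod_singleton hμ, ENNReal.tsum_const,
    ENat.card_eq_coe_natCard, ENat.toENNReal_coe]

end HaarBalls

end PadicInt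

open PadicInt

theorem measurePreserving_iff_balanced_mod_general
    (p : ℕ) [Fact p.Prime] [MeasurableSpace ℤ_[p]] [BorelSpace ℤ_[p]]
    (μ : Measure ℤ_[p])
    (hμ : ∀ (a : ℤ_[p]) (k : ℕ),
      μ {x : ℤ_[p] | ‖x - a‖ ≤ (p : ℝ) ^ (-(k : ℤ))} = ((p : ENNReal) ^ k)⁻¹)
    (n m : ℕ) (hnm : m ≤ n)
    (F : (Fin n → ℤ_[p]) → (Fin m → ℤ_[p]))
    (hF : ∀ (a b : Fin n → ℤ_[p]) (j : Fin m), ‖F a j - F b j‖ ≤ ⨆ i, ‖a i - b i‖) :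
    (∀ S : Set (Fin m → ℤ_[p]), MeasurableSet S →
        Measure.pi (fun _ : Fin n => μ) (F ⁻¹' S) = Measure.pi (fun _ : Fin m => μ) S) ↔
      ∀ k : ℕ, 1 ≤ k → ∀ y : Fin m → ZMod (p ^ k),
        Nat.card {x : Fin n → ZMod (p ^ k) //
            (fun j => PadicInt.toZModPow k (F (fun i => ((x i).val : ℤ_[p])) j)) = y} =
          p ^ (k * (n - m)) := by
  have hball : ∀ (a : ℤ_[p]) (k : ℕ),
      μ (closedBall a ((p : ℝ) ^ (-(k : ℤ)))) = ((p : ℝ≥0∞) ^ k)⁻¹ := hμ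
  have := isProbabilityMeasure_of_measure_closedBall hball
  have hLip : LipschitzWith 1 F := lipschitzWith_one_of_norm_sub_le_iSup hF
  have hFm : Measurable F := hLip.continuous.measurable
  have hcyl : ∀ k (y : Fin m → ZMod (p ^ k)),
      Measure.pi (fun _ : Fin n => μ) (F ⁻¹' (reduceMod k ⁻¹' {y})) =
          Measure.pi (fun _ : Fin m => μ) (reduceMod k ⁻¹' {y}) ↔
        Nat.card (inducedMod F k ⁻¹' {y}) = p ^ (k * (n - m)) := fun k y => by
    rw [preimage_preimage_reduceMod_of_lipschitzWith hLip, measure_pi_preimage_reduceMod hball,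
      measure_pi_preimage_reduceMod_singleton hball, Fintype.card_fin, Fintype.card_fin, pow_mul,
      ← Nat.cast_pow]
    exact ENNReal.natCast_mul_inv_pow_eq_inv_pow_iff (pow_ne_zero _ (Fact.out : p.Prime).ne_zero)
      hnm
  constructor
  · intro h k _ y
    exact (hcyl k y).1 (h _ (measurableSet_preimage_reduceMod_singleton k y))
  · intro h S hS
    have hmap : Measure.pi (fun _ : Fin m => μ) = (Measure.pi fun _ : Fin n => μ).map F := by
      refine ext_of_modCylinders ?_ fun k hk y => ?_
      · rw [Measure.map_apply hFm .univ, Set.preimage_univ, measure_univ, measure_univ]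
      · rw [Measure.map_apply hFm (measurableSet_preimage_reduceMod_singleton k y)]
        exact ((hcyl k y).2 (h k hk y)).symm
    rw [hmap, Measure.map_apply hFm hS]

/-- A 1-Lipschitz (w.r.t. the maximum p-adic metric) map `F : ℤ_p^n → ℤ_p^m` with `n ≥ m ≥ 1`
preserves the Haar product measure (i.e. `μ_p^n (F⁻¹ S) = μ_p^m S` for every measurable `S`)
if and only if for every `k ≥ 1` the induced map `(ℤ/p^kℤ)^n → (ℤ/p^kℤ)^m` is balanced:
every point has exactly `p^{k(n-m)}` preimages. -/
theorem measurePreserving_iff_balanced_mod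
    (p : ℕ) [Fact p.Prime] [MeasurableSpace ℤ_[p]] [BorelSpace ℤ_[p]]
    (μ : Measure ℤ_[p])
    (hμ : ∀ (a : ℤ_[p]) (k : ℕ),
      μ {x : ℤ_[p] | ‖x - a‖ ≤ (p : ℝ) ^ (-(k : ℤ))} = ((p : ENNReal) ^ k)⁻¹)
    (n m : ℕ) (hm : 1 ≤ m) (hnm : m ≤ n)
    (F : (Fin n → ℤ_[p]) → (Fin m → ℤ_[p]))
    (hF : ∀ (a b : Fin n → ℤ_[p]) (j : Fin m), ‖F a j - F b j‖ ≤ ⨆ i, ‖a i - b i‖) :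
    (∀ S : Set (Fin m → ℤ_[p]), MeasurableSet S →
        Measure.pi (fun _ : Fin n => μ) (F ⁻¹' S) = Measure.pi (fun _ : Fin m => μ) S) ↔
      ∀ k : ℕ, 1 ≤ k → ∀ y : Fin m → ZMod (p ^ k),
        Nat.card {x : Fin n → ZMod (p ^ k) //
            (fun j => PadicInt.toZModPow k (F (fun i => ((x i).val : ℤ_[p])) j)) = y} =
          p ^ (k * (n - m)) :=
  measurePreserving_iff_balanced_mod_general p μ hμ n m hnm F hF
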